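/- Let k = k_1 + k_2 with k_1, k_2 ≥ 1, and let A_1, ..., A_k be n × n matrices over a commutative semiring. Define the n^{k_1} × n matrix A by A[(i_1,...,i_{k_1}), l] = ∏_{j=1}^{k_1} A_j[i_j, l] and the n^{k_2} × n matrix B by B[(j_1,...,j_{k_2}), l] = ∏_{m=1}^{k_2} A_{k_1+m}[j_m, l]. Then the k-dimensional matrix product D of A_1,...,A_k satisfies D[i_1,...,i_{k_1}, j_1,...,j_{k_2}] = (A * Bᵀ)[(i_1,...,i_{k_1}), (j_1,...,j_{k_2})] for all index tuples. -/
import Mathlib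


open Matrix

theorem stmt_7 {R : Type*} [CommSemiring R] {n k₁ k₂ : ℕ}
    (hk₁ : 1 ≤ k₁) (hk₂ : 1 ≤ k₂)
    (A : Fin (k₁ + k₂) → Matrix (Fin n) (Fin n) R)
    (v : Fin (k₁ + k₂) → Fin n) :
    (∑ l : Fin n, ∏ p : Fin (k₁ + k₂), A p (v p) l) =
      (Matrix.of (fun (x : Fin k₁ → Fin n) (l : Fin n) =>
          ∏ p : Fin k₁, A (Fin.castAdd k₂ p) (x p) l) *
        (Matrix.of (fun (y : Fin k₂ → Fin n) (l : Fin n) =>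
          ∏ m : Fin k₂, A (Fin.natAdd k₁ m) (y m) l))ᵀ)
        (fun p => v (Fin.castAdd k₂ p)) (fun m => v (Fin.natAdd k₁ m)) := by
  simp only [Matrix.mul_apply, Matrix.transpose_apply, Matrix.of_apply]
  refine Finset.sum_congr rfl fun l _ => ?_
  exact Fin.prod_univ_add (f := fun p => A p (v p) l)
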